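/- Let G be a TSO game of group I (player X updates after her moves, player Y updates before her moves), let c_0 be a configuration, and suppose σ_X is a positional winning strategy for player X from c_0; let σ̄_X(c) = \overline{σ_X(c)} be the flushed strategy. Let G' be the finite game whose Y-configurations are those Y-configurations of G holding at most one buffered message in total (together with c_0 if c_0 is a Y-configuration), whose X-configurations are the G-successors of these Y-configurations (together with c_0 if c_0 is an X-configuration), whose transition relation is the restriction of G's transition relation to these configurations, and whose final configurations are C_F intersected with its configurations. Then the restriction σ̄'_X of σ̄_X to the X-configurations of G' is a valid strategy for G' and is a winning strategy for player X from c_0 in G'. -/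

import Mathlib

namespace TSOGames

/-- The data of a (safety) game: a partition of the configurations into those of
player A (`isA`) and those of player B, a transition relation, and final configurations. -/
structure SGame (C : Type*) where
  isA : C → Prop
  step : C → C → Prop
  final : C → Prop

namespace SGame

variable {C : Type*} (G : SGame C)

/-- The transition relation alternates between the two players' configurations. -/
def Alternating : Prop := ∀ c c', G.step c c' → (G.isA c ↔ ¬ G.isA c')

/-- Every configuration has at least one successor. -/
def DeadlockFree : Prop := ∀ c, ∃ c', G.step c c'

/-- Final configurations belong to player A. -/
def FinalInA : Prop := ∀ c, G.final c → G.isA c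

/-- An (infinite) play: consecutive configurations are related by `step`. -/
def IsPlay (ρ : ℕ → C) : Prop := ∀ i, G.step (ρ i) (ρ (i + 1))

/-- A (history-dependent) strategy `σ`, given the strict history and the current
configuration, chooses a successor; it is valid for the player owning the
configurations satisfying `own` if it always chooses an actual successor. -/
def ValidStrat (own : C → Prop) (σ : List C → C → C) : Prop :=
  ∀ h c, own c → G.step c (σ h c)

/-- A play is consistent with the strategy `σ` of the player owning the
configurations satisfying `own` if at every such configuration the play follows `σ`. -/
def Consistent (own : C → Prop) (σ : List C → C → C) (ρ : ℕ → C) : Prop :=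
  ∀ i, own (ρ i) → ρ (i + 1) = σ (List.ofFn fun j : Fin i => ρ j) (ρ i)

/-- A play is winning for player B if it visits a final configuration. -/
def BWins (ρ : ℕ → C) : Prop := ∃ i, G.final (ρ i)

/-- A play is winning for player A if it never visits a final configuration. -/
def AWinsPlay (ρ : ℕ → C) : Prop := ¬ G.BWins ρ

/-- `σ` is a winning strategy from `c0` for the player owning the configurations
satisfying `own`, whose plays are winning when they satisfy `winPlay`:
it is valid and every play from `c0` consistent with it is winning. -/
def WinningStrat (own : C → Prop) (winPlay : (ℕ → C) → Prop)
    (σ : List C → C → C) (c0 : C) : Prop :=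
  G.ValidStrat own σ ∧
    ∀ ρ : ℕ → C, ρ 0 = c0 → G.IsPlay ρ → Consistent own σ ρ → winPlay ρ

/-- The given player has a winning strategy from `c0`. -/
def Wins (own : C → Prop) (winPlay : (ℕ → C) → Prop) (c0 : C) : Prop :=
  ∃ σ, G.WinningStrat own winPlay σ c0

/-- `c0` is winning for player A. -/
def WinA (c0 : C) : Prop := G.Wins (fun c => G.isA c) G.AWinsPlay c0

/-- `c0` is winning for player B. -/
def WinB (c0 : C) : Prop := G.Wins (fun c => ¬ G.isA c) G.BWins c0

end SGame

/-- Restriction of a game to a subset `D` of its configurations. -/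
def restrictGame {C : Type*} (G : SGame C) (D : Set C) : SGame C where
  isA := G.isA
  step := fun c c' => G.step c c' ∧ c ∈ D ∧ c' ∈ D
  final := fun c => G.final c ∧ c ∈ D

/-- The winning condition on plays for the player encoded by `b` (`true` = player A,
who wins a play iff it avoids the final configurations; `false` = player B). -/
def winPlayOf {C : Type*} (G : SGame C) (b : Bool) : (ℕ → C) → Prop :=
  fun ρ => if b then ¬ G.BWins ρ else G.BWins ρ

end TSOGames
namespace TSOGames

/-- TSO instructions: read, write, skip, and memory fence. -/
inductive Instr (X V : Type*) : Type _
  | read (x : X) (v : V)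
  | write (x : X) (v : V)
  | skip
  | fence

/-- Whether an instruction is a read instruction. -/
def Instr.isRead {X V : Type*} : Instr X V → Bool
  | .read _ _ => true
  | _ => false

/-- A concurrent program: a family of processes indexed by `I`, each a transition
system over local states `S` labeled by instructions over variables `X` and values `V`. -/
structure Program (I S X V : Type*) where
  delta : I → S → Instr X V → S → Prop

/-- A TSO configuration: local states, per-process FIFO store buffers
(newest message at the head, oldest at the end), and the shared memory. -/
structure Conf (I S X V : Type*) where
  st : I → S
  buf : I → List (X × V)
  mem : X → V

section TSO

variable {I S X V : Type*}

/-- The value of the most recent buffered write on `x`, if any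
(the buffer stores the newest message first). -/
def bufVal [DecidableEq X] : List (X × V) → X → Option V
  | [], _ => none
  | (y, v) :: rest, x => if y = x then some v else bufVal rest x

/-- The value process `ι` reads from variable `x`: the most recent buffered write of
`ι` on `x` if there is one, and the memory value otherwise. -/
def readVal [DecidableEq X] (c : Conf I S X V) (ι : I) (x : X) : V :=
  (bufVal (c.buf ι) x).getD (c.mem x)

variable [DecidableEq I] [DecidableEq X]

/-- Execution of one instruction by process `ι` under TSO semantics. -/
inductive InstrStep (P : Program I S X V) (ι : I) (instr : Instr X V) :
    Conf I S X V → Conf I S X V → Prop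
  | read (c : Conf I S X V) (x : X) (v : V) (s' : S) :
      instr = Instr.read x v → P.delta ι (c.st ι) (Instr.read x v) s' →
      readVal c ι x = v →
      InstrStep P ι instr c ⟨Function.update c.st ι s', c.buf, c.mem⟩
  | write (c : Conf I S X V) (x : X) (v : V) (s' : S) :
      instr = Instr.write x v → P.delta ι (c.st ι) (Instr.write x v) s' →
      InstrStep P ι instr c
        ⟨Function.update c.st ι s', Function.update c.buf ι ((x, v) :: c.buf ι), c.mem⟩
  | skip (c : Conf I S X V) (s' : S) :
      instr = Instr.skip → P.delta ι (c.st ι) Instr.skip s' →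
      InstrStep P ι instr c ⟨Function.update c.st ι s', c.buf, c.mem⟩
  | fence (c : Conf I S X V) (s' : S) :
      instr = Instr.fence → P.delta ι (c.st ι) Instr.fence s' → c.buf ι = [] →
      InstrStep P ι instr c ⟨Function.update c.st ι s', c.buf, c.mem⟩

/-- An update step: the oldest buffered message of some process is committed to memory. -/
inductive UpdStep : Conf I S X V → Conf I S X V → Prop
  | mk (c : Conf I S X V) (ι : I) (x : X) (v : V) (w : List (X × V)) :
      c.buf ι = w ++ [(x, v)] →
      UpdStep c ⟨c.st, Function.update c.buf ι w, Function.update c.mem x v⟩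

/-- Finitely many update steps. -/
def Upds : Conf I S X V → Conf I S X V → Prop := Relation.ReflTransGen UpdStep

/-- `flush` maps every configuration `c` to the configuration `c̄` obtained by
updating all buffered messages to the memory: `c →up* c̄` and all buffers of `c̄` are empty. -/
def IsFlush (flush : Conf I S X V → Conf I S X V) : Prop :=
  ∀ c, Upds c (flush c) ∧ ∀ ι, (flush c).buf ι = []

/-- Update steps by a player, if she is allowed to perform them (otherwise nothing happens). -/
def OptUpds (allowed : Bool) (c c' : Conf I S X V) : Prop :=
  if allowed then Upds c c' else c' = c

/-- A move of a player whose permissions to update before resp. after her move are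
given by `perm`: optional updates before, one instruction, optional updates after. -/
def Move (P : Program I S X V) (perm : Bool × Bool) (c c' : Conf I S X V) : Prop :=
  ∃ c1 c2, OptUpds perm.1 c c1 ∧ (∃ ι instr, InstrStep P ι instr c1 c2) ∧
    OptUpds perm.2 c2 c'

/-- The TSO game induced by a program `P`, update permissions
`permA`/`permB` = (may update before her move, may update after her move)
for players A and B, and a set `SF` of final local states. Game configurations are
TSO configurations annotated by `true` (player A's) or `false` (player B's). -/
def tsoGame (P : Program I S X V) (permA permB : Bool × Bool) (SF : Set S) :
    SGame (Conf I S X V × Bool) where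
  isA := fun c => c.2 = true
  step := fun c c' =>
    (c.2 = true ∧ c'.2 = false ∧ Move P permA c.1 c'.1) ∨
    (c.2 = false ∧ c'.2 = true ∧ Move P permB c.1 c'.1)
  final := fun c => c.2 = true ∧ ∃ ι, c.1.st ι ∈ SF

/-- The configurations owned by the player encoded by `b` (`true` = player A). -/
def ownOf (b : Bool) : Conf I S X V × Bool → Prop := fun c => c.2 = b

/-- The total number of buffered messages of a configuration. -/
def totalBuf [Fintype I] (c : Conf I S X V) : ℕ := ∑ ι, (c.buf ι).length

end TSO

end TSOGames
namespace TSOGames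

variable {I S X V : Type*}

/-- The Y-configurations of the restricted group-I game: the Y-configurations of `G`
(the player encoded by `xIsA` is X) with at most one buffered message in total,
together with `c0` if `c0` is a Y-configuration. -/
def groupICY [Fintype I] (xIsA : Bool) (c0 : Conf I S X V × Bool) :
    Set (Conf I S X V × Bool) :=
  {c | c.2 = !xIsA ∧ totalBuf c.1 ≤ 1} ∪ {c | c = c0 ∧ c0.2 = !xIsA}

/-- The X-configurations of the restricted group-I game: the `G`-successors of its
Y-configurations, together with `c0` if `c0` is an X-configuration. -/
def groupICX [Fintype I] (G : SGame (Conf I S X V × Bool)) (xIsA : Bool)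
    (c0 : Conf I S X V × Bool) : Set (Conf I S X V × Bool) :=
  {c' | ∃ c ∈ groupICY xIsA c0, G.step c c'} ∪ {c | c = c0 ∧ c0.2 = xIsA}

end TSOGames
namespace TSOGames


/-! Flushing after the moves of player X preserves winning, because the opponent may perform
the same updates at the start of her next move: a play against the flushed strategy is shadowed
by a play against the original one that passes through the unflushed configurations instead and
has the same local states, hence the same final configurations. The restriction to the finite
game is harmless since the flushed strategy only leads to configurations with empty buffers. -/

namespace SGame

variable {C : Type*} {G : SGame C}

theorem winPlayOf_congr {G' : SGame C} (b : Bool) {ρ ρ' : ℕ → C}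
    (h : ∀ i, G.final (ρ i) ↔ G'.final (ρ' i)) : winPlayOf G b ρ ↔ winPlayOf G' b ρ' := by
  simp only [winPlayOf, BWins, h]

open Classical in
/-- The play following `σ` at the configurations of `own` that shadows `ρ`, a play following
`g ∘ σ` there. -/
noncomputable def shadow (own : C → Prop) (σ : C → C) (ρ : ℕ → C) : ℕ → C
  | 0 => ρ 0
  | j + 1 => if own (ρ j) then σ (ρ j) else ρ (j + 1)

theorem WinningStrat.comp_of_absorb {own : C → Prop} {b : Bool} {σ g : C → C} {c0 : C}
    (hσ : G.WinningStrat own (winPlayOf G b) (fun _ c => σ c) c0)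
    (halt : ∀ c d, own c → G.step c d → ¬ own d)
    (hext : ∀ c d, own c → G.step c d → G.step c (g d))
    (habsorb : ∀ d e, ¬ own d → G.step (g d) e → G.step d e)
    (hfinal : ∀ d, G.final (g d) ↔ G.final d) :
    G.WinningStrat own (winPlayOf G b) (fun _ c => g (σ c)) c0 := by
  obtain ⟨hvalid, hwin⟩ := hσ
  refine ⟨fun _ c hc => hext c _ hc (hvalid [] c hc), fun ρ h0 hplay hcons => ?_⟩
  set ρ' := shadow own σ ρ
  have hrel : ∀ i, ρ' i = ρ i ∨ (¬ own (ρ' i) ∧ ¬ own (ρ i) ∧ ρ i = g (ρ' i)) := by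
    rintro (_ | j)
    · exact .inl rfl
    by_cases hj : own (ρ j)
    · have hρ' : ρ' (j + 1) = σ (ρ j) := if_pos hj
      exact .inr ⟨hρ' ▸ halt _ _ hj (hvalid [] _ hj), halt _ _ hj (hplay j), hρ' ▸ hcons j hj⟩
    · exact .inl (if_neg hj)
  have hplay' : G.IsPlay ρ' := by
    intro i
    by_cases hi : own (ρ i)
    · have hρ' : ρ' (i + 1) = σ (ρ i) := if_pos hi
      obtain heq | ⟨-, hni, -⟩ := hrel i
      · exact heq ▸ hρ' ▸ hvalid [] _ hi
      · exact absurd hi hni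
    · have hρ' : ρ' (i + 1) = ρ (i + 1) := if_neg hi
      rw [hρ']
      obtain heq | ⟨hni', -, hg⟩ := hrel i
      · exact heq ▸ hplay i
      · exact habsorb _ _ hni' (hg ▸ hplay i)
  have hcons' : Consistent own (fun _ c => σ c) ρ' := by
    intro i hi
    obtain heq | ⟨hni', -⟩ := hrel i
    · exact heq ▸ if_pos (heq ▸ hi)
    · exact absurd hi hni'
  refine (winPlayOf_congr b fun i => ?_).mpr (hwin ρ' h0 hplay' hcons')
  obtain heq | ⟨-, -, hg⟩ := hrel i
  · rw [heq]
  · rw [hg, hfinal]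

theorem WinningStrat.restrictGame {own : C → Prop} {b : Bool} {σ : List C → C → C} {c0 : C}
    {D : Set C} (hσ : G.WinningStrat own (winPlayOf G b) σ c0)
    (hD : ∀ h c, own c → c ∈ D → σ h c ∈ D) :
    (restrictGame G D).WinningStrat (fun c => own c ∧ c ∈ D)
      (winPlayOf (restrictGame G D) b) σ c0 := by
  refine ⟨fun h c ⟨hc, hcD⟩ => ⟨hσ.1 h c hc, hcD, hD h c hc hcD⟩, fun ρ h0 hplay hcons => ?_⟩
  have hmem : ∀ i, ρ i ∈ D := fun i => (hplay i).2.1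
  have hwin := hσ.2 ρ h0 (fun i => (hplay i).1) (fun i hi => hcons i ⟨hi, hmem i⟩)
  refine (winPlayOf_congr b fun i => ?_).mpr hwin
  simp only [TSOGames.restrictGame, hmem, and_true]

end SGame

section TSO

variable {I S X V : Type*} [DecidableEq I] [DecidableEq X] {P : Program I S X V}

theorem Upds.st_eq {c c' : Conf I S X V} (h : Upds c c') : c'.st = c.st := by
  induction h with
  | refl => rfl
  | tail _ hstep ih => cases hstep; exact ih

theorem Move.upds_after {perm : Bool × Bool} (hp : perm.2 = true) {a b b' : Conf I S X V}
    (h : Move P perm a b) (hu : Upds b b') : Move P perm a b' := by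
  obtain ⟨c1, c2, h1, h2, h3⟩ := h
  refine ⟨c1, c2, h1, h2, ?_⟩
  simp only [OptUpds, hp, if_true] at h3 ⊢
  exact Relation.ReflTransGen.trans h3 hu

theorem Move.upds_before {perm : Bool × Bool} (hp : perm.1 = true) {a a' b : Conf I S X V}
    (hu : Upds a' a) (h : Move P perm a b) : Move P perm a' b := by
  obtain ⟨c1, c2, h1, h2, h3⟩ := h
  refine ⟨c1, c2, ?_, h2, h3⟩
  simp only [OptUpds, hp, if_true] at h1 ⊢
  exact Relation.ReflTransGen.trans hu h1

/-- The TSO game between player X with update permissions `permX` and player Y with `permY`,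
where X is player A iff `xIsA`. -/
abbrev tsoGameXY (P : Program I S X V) (permX permY : Bool × Bool) (SF : Set S) (xIsA : Bool) :
    SGame (Conf I S X V × Bool) :=
  tsoGame P (if xIsA then permX else permY) (if xIsA then permY else permX) SF

theorem tsoGameXY_step_iff {permX permY : Bool × Bool} {SF : Set S} {xIsA : Bool}
    {c d : Conf I S X V × Bool} :
    (tsoGameXY P permX permY SF xIsA).step c d ↔
      d.2 = !c.2 ∧ Move P (if c.2 = xIsA then permX else permY) c.1 d.1 := by
  obtain ⟨c, _ | _⟩ := c <;> obtain ⟨d, _ | _⟩ := d <;> cases xIsA <;> simp [tsoGameXY, tsoGame]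

theorem tsoGame_final_of_upds {permA permB : Bool × Bool} {SF : Set S} {c c' : Conf I S X V}
    (hu : Upds c c') (b : Bool) :
    (tsoGame P permA permB SF).final (c', b) ↔ (tsoGame P permA permB SF).final (c, b) := by
  simp only [tsoGame, hu.st_eq]

theorem tsoGameXY_winningStrat_flush {permX permY : Bool × Bool}
    (hX : permX.2 = true) (hY : permY.1 = true) {SF : Set S} {xIsA : Bool}
    {flush : Conf I S X V → Conf I S X V} (hflush : IsFlush flush) {c0 : Conf I S X V × Bool}
    {σX : Conf I S X V × Bool → Conf I S X V × Bool}
    (hwin : (tsoGameXY P permX permY SF xIsA).WinningStrat (ownOf xIsA)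
      (winPlayOf (tsoGameXY P permX permY SF xIsA) xIsA) (fun _ c => σX c) c0) :
    (tsoGameXY P permX permY SF xIsA).WinningStrat (ownOf xIsA)
      (winPlayOf (tsoGameXY P permX permY SF xIsA) xIsA)
      (fun _ c => (flush (σX c).1, (σX c).2)) c0 := by
  refine hwin.comp_of_absorb (g := fun d => (flush d.1, d.2)) ?_ ?_ ?_ ?_
  · rintro c d (hc : c.2 = xIsA) hstep
    simp [ownOf, (tsoGameXY_step_iff.mp hstep).1, hc]
  · rintro c d (hc : c.2 = xIsA) hstep
    rw [tsoGameXY_step_iff, hc, if_pos rfl] at hstep ⊢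
    exact ⟨hstep.1, hstep.2.upds_after hX (hflush d.1).1⟩
  · rintro d e (hd : d.2 ≠ xIsA) hstep
    rw [tsoGameXY_step_iff, if_neg hd] at hstep ⊢
    exact ⟨hstep.1, Move.upds_before hY (hflush d.1).1 hstep.2⟩
  · exact fun d => tsoGame_final_of_upds (hflush d.1).1 d.2

end TSO

/-- Group I, restriction to the finite game `G'`: the flushed winning strategy of
player X restricted to the X-configurations of `G'` is a valid strategy of `G'` and
is winning for player X from `c0` in `G'`. -/
theorem statement4 {I S X V : Type} [DecidableEq I] [DecidableEq X] [Fintype I]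
    (P : Program I S X V) (SF : Set S)
    (permX permY : Bool × Bool) (hX : permX.2 = true) (hY : permY.1 = true)
    (xIsA : Bool)
    (G : SGame (Conf I S X V × Bool))
    (hG : G = tsoGame P (if xIsA then permX else permY) (if xIsA then permY else permX) SF)
    (flush : Conf I S X V → Conf I S X V) (hflush : IsFlush flush)
    (c0 : Conf I S X V × Bool)
    (σX : Conf I S X V × Bool → Conf I S X V × Bool)
    (hwin : G.WinningStrat (ownOf xIsA) (winPlayOf G xIsA) (fun _ c => σX c) c0)
    (D : Set (Conf I S X V × Bool))
    (hD : D = groupICX G xIsA c0 ∪ groupICY xIsA c0)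
    (G' : SGame (Conf I S X V × Bool)) (hG' : G' = restrictGame G D) :
    G'.WinningStrat (fun c => c.2 = xIsA ∧ c ∈ D) (winPlayOf G' xIsA)
      (fun _ c => (flush (σX c).1, (σX c).2)) c0 := by
  subst hG hD hG'
  refine (tsoGameXY_winningStrat_flush hX hY hflush hwin).restrictGame ?_
  intro _ c (hc : c.2 = xIsA) _
  have hturn : (σX c).2 = !xIsA := hc ▸ (tsoGameXY_step_iff.mp (hwin.1 [] c hc)).1
  have hbuf : totalBuf (flush (σX c).1) ≤ 1 := by
    simp [totalBuf, (hflush (σX c).1).2]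
  exact .inr (.inl ⟨hturn, hbuf⟩)

end TSOGames
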